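/- arXiv:1602.03229 — 6 statements merged into one kernel-verified Lean document; each statement's English description precedes it below -/
import Mathlib

section
/- Let G be a group in which every finitely generated subgroup is a virtual retract (i.e., a retract of some finite-index subgroup of G). Then G admits no expanding inner automorphism: there is no finitely generated subgroup H ≤ G and element g ∈ G with H strictly contained in g⁻¹Hg. -/
/-- The conjugate subgroup `c⁻¹ H c`. -/
def conjBy {G : Type*} [Group G] (c : G) (H : Subgroup G) : Subgroup G :=
  H.map (MulAut.conj c⁻¹).toMonoidHom

/-- `H` is a virtual retract of `G`: a retract of a finite index subgroup of `G`. -/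
def IsVirtualRetract {G : Type*} [Group G] (H : Subgroup G) : Prop :=
  ∃ K : Subgroup G, K.index ≠ 0 ∧ H ≤ K ∧
    ∃ f : K →* G, Set.range f = (H : Set G) ∧ ∀ k : K, (k : G) ∈ H → f k = (k : G)

lemma mem_conjBy {G : Type*} [Group G] {c x : G} {H : Subgroup G} :
    x ∈ conjBy c H ↔ c * x * c⁻¹ ∈ H := by
  constructor
  · rintro ⟨h, hh, rfl⟩
    simpa [MulAut.conj, mul_assoc] using hh
  · intro hx
    exact ⟨c * x * c⁻¹, hx, by simp [MulAut.conj, mul_assoc]⟩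

/-- LR-groups admit no expanding inner automorphisms. -/
theorem stmt_3 {G : Type*} [Group G]
    (hLR : ∀ H : Subgroup G, H.FG → IsVirtualRetract H) :
    ¬ ∃ (H : Subgroup G) (g : G), H.FG ∧ H < conjBy g H := by
  rintro ⟨H, g, hFG, hlt⟩
  obtain ⟨K, hKind, hHK, f, hrange, hid⟩ := hLR H hFG
  -- conjugation by g maps H into H
  have hP1 : ∀ h ∈ H, g * h * g⁻¹ ∈ H := fun h hh => mem_conjBy.mp (hlt.le hh)
  have hPn : ∀ n : ℕ, ∀ h ∈ H, g ^ n * h * (g ^ n)⁻¹ ∈ H := by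
    intro n
    induction n with
    | zero => intro h hh; simpa using hh
    | succ n ih =>
      intro h hh
      have e : g ^ (n + 1) * h * (g ^ (n + 1))⁻¹
          = g * (g ^ n * h * (g ^ n)⁻¹) * g⁻¹ := by group
      rw [e]
      exact hP1 _ (ih h hh)
  -- an element of conjBy g H not in H
  obtain ⟨x₀, hx₀, hx₀n⟩ := SetLike.exists_of_lt hlt
  have hx₀' : g * x₀ * g⁻¹ ∈ H := mem_conjBy.mp hx₀
  -- a positive power of g lies in K
  obtain ⟨n, hn0, -, htK⟩ := Subgroup.exists_pow_mem_of_index_ne_zero hKind g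
  obtain ⟨m, rfl⟩ : ∃ m, n = m + 1 := ⟨n - 1, by omega⟩
  set t : G := g ^ (m + 1) with ht_def
  -- the element x
  set x : G := (g ^ m)⁻¹ * x₀ * g ^ m with hx_def
  have htx : t * x * t⁻¹ ∈ H := by
    have e : t * x * t⁻¹ = g * x₀ * g⁻¹ := by rw [ht_def, hx_def]; group
    rw [e]; exact hx₀'
  have hxnH : x ∉ H := by
    intro hx
    have e : g ^ m * x * (g ^ m)⁻¹ = x₀ := by rw [hx_def]; group
    exact hx₀n (e ▸ hPn m x hx)
  have hxK : x ∈ K := by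
    have e : x = t⁻¹ * (t * x * t⁻¹) * t := by group
    rw [e]
    exact mul_mem (mul_mem (inv_mem htK) (hHK htx)) htK
  -- conjugation by t maps H into H
  have hPt : ∀ h ∈ H, t * h * t⁻¹ ∈ H := hPn (m + 1)
  -- adjust t by the retraction
  set a : G := f ⟨t, htK⟩ with ha_def
  have haH : a ∈ H := by
    have : a ∈ Set.range f := ⟨_, rfl⟩
    rwa [hrange] at this
  set s : G := a⁻¹ * t with hs_def
  have hsK : s ∈ K := mul_mem (inv_mem (hHK haH)) htK
  have hfs : f ⟨s, hsK⟩ = 1 := by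
    have e : (⟨s, hsK⟩ : K) = (⟨a, hHK haH⟩ : K)⁻¹ * ⟨t, htK⟩ := rfl
    rw [e, map_mul, map_inv, hid ⟨a, hHK haH⟩ haH, ← ha_def]
    simp
  -- conjugation by s maps H into H
  have hPs : ∀ h ∈ H, s * h * s⁻¹ ∈ H := by
    intro h hh
    have e : s * h * s⁻¹ = a⁻¹ * (t * h * t⁻¹) * a := by rw [hs_def]; group
    rw [e]
    exact mul_mem (mul_mem (inv_mem haH) (hPt h hh)) haH
  set z : G := s * x * s⁻¹ with hz_def
  have hzH : z ∈ H := by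
    have e : z = a⁻¹ * (t * x * t⁻¹) * a := by rw [hz_def, hs_def]; group
    rw [e]
    exact mul_mem (mul_mem (inv_mem haH) htx) haH
  have hz2H : s * z * s⁻¹ ∈ H := hPs z hzH
  have hzK : z ∈ K := hHK hzH
  have hz2K : s * z * s⁻¹ ∈ K := hHK hz2H
  -- f applied to x
  have hfx : f ⟨x, hxK⟩ = z := by
    have e : (⟨z, hzK⟩ : K) = ⟨s, hsK⟩ * ⟨x, hxK⟩ * (⟨s, hsK⟩)⁻¹ := rfl
    have := hid ⟨z, hzK⟩ hzH
    rw [e, map_mul, map_mul, map_inv, hfs] at this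
    rw [hz_def]
    simpa using this
  have key : s * z * s⁻¹ = z := by
    have e : (⟨s * z * s⁻¹, hz2K⟩ : K) = ⟨s, hsK⟩ * ⟨z, hzK⟩ * (⟨s, hsK⟩)⁻¹ := rfl
    have := hid ⟨s * z * s⁻¹, hz2K⟩ hz2H
    rw [e, map_mul, map_mul, map_inv, hfs, hid ⟨z, hzK⟩ hzH] at this
    simpa using this.symm
  -- hence x = z ∈ H, contradiction
  apply hxnH
  have h1 : s * (s * x * s⁻¹) * s⁻¹ = s * x * s⁻¹ := by rw [← hz_def]; exact key
  have h2 : s * x * s⁻¹ = x := by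
    have h3 : s⁻¹ * (s * (s * x * s⁻¹) * s⁻¹) * s = s⁻¹ * (s * x * s⁻¹) * s := by
      rw [h1]
    simpa [mul_assoc] using h3
  have : x = z := by rw [hz_def, h2]
  rw [this]; exact hzH
end

section
/- Let G₁ be a finite-index subgroup of a group G and let H ≤ G₁. If H is conjugacy distinguished in G₁, then H is conjugacy distinguished in G. -/
/-- `H` is conjugacy distinguished within the subgroup `G₁` of the ambient group:
every element of `G₁` that is not `G₁`-conjugate into `H` fails to be `G₁`-conjugate
into some subgroup `D ≤ G₁` of finite index in `G₁` containing `H`. -/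
def ConjDistWithin {G : Type*} [Group G] (G₁ H : Subgroup G) : Prop :=
  ∀ g ∈ G₁, (∀ x ∈ G₁, x⁻¹ * g * x ∉ H) →
    ∃ D : Subgroup G, D ≤ G₁ ∧ D.relIndex G₁ ≠ 0 ∧ H ≤ D ∧
      ∀ x ∈ G₁, x⁻¹ * g * x ∉ D

/-!
Suppose `g` is not conjugate into `H`. For each left coset `x G₁` with `x⁻¹ g x ∈ G₁`, the
hypothesis in `G₁` gives a finite index `D_x ≤ G₁` containing `H` into which no `G₁`-conjugate
of `x⁻¹ g x` falls, i.e. `y⁻¹ g y ∉ D_x` for every `y ∈ x G₁`; on the other cosets `G₁` itself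
does this. The intersection of these finitely many subgroups separates `g` from `H`.
-/

section

variable {G : Type*} [Group G] {G₁ H : Subgroup G} {g : G}

theorem conj_mul_eq_conj_conj (g x y : G) :
    (x * y)⁻¹ * g * (x * y) = y⁻¹ * (x⁻¹ * g * x) * y := by
  group

theorem ConjDistWithin.exists_separating_subgroup (hfin : G₁.index ≠ 0)
    (hcd : ConjDistWithin G₁ H) (hg : ∀ x : G, x⁻¹ * g * x ∉ H) {x : G}
    (hx : x⁻¹ * g * x ∈ G₁) :
    ∃ D : Subgroup G, D.index ≠ 0 ∧ H ≤ D ∧ ∀ k ∈ G₁, k⁻¹ * (x⁻¹ * g * x) * k ∉ D := by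
  obtain ⟨D, hDG₁, hrel, hHD, hD⟩ := hcd _ hx fun k _ hk ↦ hg (x * k) <| by
    rwa [conj_mul_eq_conj_conj]
  refine ⟨D, ?_, hHD, hD⟩
  rw [← Subgroup.relIndex_mul_index hDG₁]
  exact mul_ne_zero hrel hfin

theorem ConjDistWithin.exists_separating_subgroup_on_coset (hfin : G₁.index ≠ 0) (hH : H ≤ G₁)
    (hcd : ConjDistWithin G₁ H) (hg : ∀ x : G, x⁻¹ * g * x ∉ H) (q : G ⧸ G₁) :
    ∃ D : Subgroup G, D.index ≠ 0 ∧ H ≤ D ∧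
      ∀ y : G, (y : G ⧸ G₁) = q → y⁻¹ * g * y ∉ D := by
  by_cases hq : ∃ x : G, (x : G ⧸ G₁) = q ∧ x⁻¹ * g * x ∈ G₁
  · obtain ⟨x, rfl, hx⟩ := hq
    obtain ⟨D, hD, hHD, hgD⟩ := hcd.exists_separating_subgroup hfin hg hx
    refine ⟨D, hD, hHD, fun y hy ↦ ?_⟩
    have hk : x⁻¹ * y ∈ G₁ := QuotientGroup.eq.mp hy.symm
    simpa only [← conj_mul_eq_conj_conj, mul_inv_cancel_left] using hgD _ hk
  · push Not at hq
    exact ⟨G₁, hfin, hH, hq⟩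

end

/-- Being conjugacy distinguished passes from a finite index subgroup to the ambient
group. -/
theorem stmt_6 {G : Type*} [Group G] (G₁ H : Subgroup G)
    (hfin : G₁.index ≠ 0) (hH : H ≤ G₁)
    (hcd : ConjDistWithin G₁ H) :
    ∀ g : G, (∀ x : G, x⁻¹ * g * x ∉ H) →
      ∃ D : Subgroup G, D.index ≠ 0 ∧ H ≤ D ∧ ∀ x : G, x⁻¹ * g * x ∉ D := by
  intro g hg
  have : G₁.FiniteIndex := ⟨hfin⟩
  choose D hD hHD hgD using hcd.exists_separating_subgroup_on_coset hfin hH hg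
  refine ⟨⨅ q, D q, Subgroup.index_iInf_ne_zero hD, le_iInf hHD, fun x hx ↦ ?_⟩
  exact hgD _ x rfl (Subgroup.mem_iInf.mp hx _)
end

section
/- Let G be a conjugacy separable group and let H be a retract of G, say G = K ⋊ H with retraction f: G → H having kernel K. Then H is conjugacy distinguished in G: for every g ∈ G that is not conjugate into H, there exists a finite-index subgroup of G containing H into which g is not conjugate. -/
/-- Retracts of conjugacy separable groups are conjugacy distinguished. -/
theorem stmt_7 {G : Type*} [Group G]
    (hcs : ∀ a b : G, ¬ IsConj a b →
      ∃ (N : Subgroup G) (hN : N.Normal),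
        haveI := hN
        Finite (G ⧸ N) ∧ ¬ IsConj (QuotientGroup.mk' N a) (QuotientGroup.mk' N b))
    (H : Subgroup G) (f : G →* G) (hrange : f.range = H) (hid : ∀ h ∈ H, f h = h)
    (K : Subgroup G) (hK : K = f.ker) :
    ∀ g : G, (∀ x : G, x⁻¹ * g * x ∉ H) →
      ∃ D : Subgroup G, D.index ≠ 0 ∧ H ≤ D ∧ ∀ x : G, x⁻¹ * g * x ∉ D := by
  intro g hg
  have hfgH : f g ∈ H := hrange ▸ ⟨g, rfl⟩
  have hnc : ¬ IsConj g (f g) := by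
    rintro ⟨c, hc⟩
    apply hg (↑c)⁻¹
    have : (↑c : G)⁻¹⁻¹ * g * (↑c)⁻¹ = f g := by
      rw [inv_inv, hc.eq, mul_inv_cancel_right]
    rw [this]
    exact hfgH
  obtain ⟨N, hN, hfin, hncq⟩ := hcs g (f g) hnc
  haveI := hN
  haveI := hfin
  set φ := QuotientGroup.mk' N with hφ
  refine ⟨MonoidHom.eqLocus φ (φ.comp f), ?_, ?_, ?_⟩
  · -- finite index
    have hNle : N ⊓ N.comap f ≤ MonoidHom.eqLocus φ (φ.comp f) := by
      rintro x ⟨hx1, hx2⟩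
      show φ x = φ (f x)
      have h1 : φ x = 1 := (QuotientGroup.eq_one_iff x).2 hx1
      have h2 : φ (f x) = 1 := (QuotientGroup.eq_one_iff (f x)).2 hx2
      rw [h1, h2]
    have hNi : N.index ≠ 0 := Subgroup.index_ne_zero_of_finite
    have hci : (N.comap f).index ≠ 0 := by
      rw [Subgroup.index_comap]
      intro h0
      exact hNi (Nat.eq_zero_of_zero_dvd (h0 ▸ Subgroup.relIndex_dvd_index_of_normal N f.range))
    have := Subgroup.index_inf_ne_zero hNi hci
    intro h0
    exact this (Nat.eq_zero_of_zero_dvd (h0 ▸ Subgroup.index_dvd_of_le hNle))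
  · -- H ≤ D
    intro h hh
    show φ h = φ (f h)
    rw [hid h hh]
  · -- g not conjugate into D
    intro x hx
    apply hncq
    have hx' : φ (x⁻¹ * g * x) = φ (f (x⁻¹ * g * x)) := hx
    simp only [map_mul, map_inv] at hx'
    refine isConj_iff.2 ⟨φ (f x) * (φ x)⁻¹, ?_⟩
    show φ (f x) * (φ x)⁻¹ * φ g * (φ (f x) * (φ x)⁻¹)⁻¹ = φ (f g)
    have : (φ x)⁻¹ * φ g * φ x = (φ (f x))⁻¹ * φ (f g) * φ (f x) := hx'
    calc φ (f x) * (φ x)⁻¹ * φ g * (φ (f x) * (φ x)⁻¹)⁻¹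
        = φ (f x) * ((φ x)⁻¹ * φ g * φ x) * (φ (f x))⁻¹ := by group
      _ = φ (f x) * ((φ (f x))⁻¹ * φ (f g) * φ (f x)) * (φ (f x))⁻¹ := by rw [this]
      _ = φ (f g) := by group
end

section
/- (B.H. Neumann) If a group G is covered by finitely many cosets H₁x₁, …, H_nx_n of subgroups H₁, …, H_n (i.e., G = ⋃ᵢ Hᵢxᵢ), then at least one of the subgroups Hᵢ has finite index in G. -/
open Pointwise
/-- B.H. Neumann: if a group is covered by finitely many right cosets `Hᵢxᵢ`,
then one of the subgroups `Hᵢ` has finite index. -/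
theorem stmt_8 {G : Type*} [Group G] (n : ℕ) (H : Fin n → Subgroup G) (x : Fin n → G)
    (hcover : ∀ g : G, ∃ i : Fin n, ∃ h ∈ H i, g = h * x i) :
    ∃ i : Fin n, (H i).index ≠ 0 := by
  have hcovers : ⋃ i ∈ (Finset.univ : Finset (Fin n)), ((x i)⁻¹) • ((H i : Set G)) = Set.univ := by
    ext g
    simp only [Set.mem_iUnion, Set.mem_univ, iff_true, Finset.mem_univ, exists_true_left]
    obtain ⟨i, h, hh, hg⟩ := hcover g⁻¹
    refine ⟨i, ?_⟩
    rw [mem_leftCoset_iff]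
    have : (x i)⁻¹⁻¹ * g = h⁻¹ := by
      have hg' : g = (x i)⁻¹ * h⁻¹ := by rw [← mul_inv_rev, ← hg, inv_inv]
      rw [inv_inv, hg', ← mul_assoc, mul_inv_cancel, one_mul]
    rw [this]
    exact (H i).inv_mem hh
  obtain ⟨k, -, hk⟩ := Subgroup.exists_finiteIndex_of_leftCoset_cover hcovers
  exact ⟨k, hk.index_ne_zero⟩
end

section
/- If a group G admits no expanding inner automorphisms (no finitely generated subgroup H satisfies H < g⁻¹Hg strictly for any g ∈ G) and G is subgroup into-conjugacy separable (SICS), then G is subgroup conjugacy separable (SCS). -/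
/-- `G` is subgroup into-conjugacy separable. -/
def SICS (G : Type*) [Group G] : Prop :=
  ∀ H₁ H₂ : Subgroup G, H₁.FG → H₂.FG → (∀ g : G, ¬ conjBy g H₂ ≤ H₁) →
    ∃ (N : Subgroup G) (hN : N.Normal),
      haveI := hN
      Finite (G ⧸ N) ∧
        ∀ q : G ⧸ N, ¬ conjBy q (H₂.map (QuotientGroup.mk' N)) ≤
          H₁.map (QuotientGroup.mk' N)

/-- `G` is subgroup conjugacy separable. -/
def SCS (G : Type*) [Group G] : Prop :=
  ∀ H₁ H₂ : Subgroup G, H₁.FG → H₂.FG → (∀ g : G, conjBy g H₂ ≠ H₁) →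
    ∃ (N : Subgroup G) (hN : N.Normal),
      haveI := hN
      Finite (G ⧸ N) ∧
        ∀ q : G ⧸ N, conjBy q (H₂.map (QuotientGroup.mk' N)) ≠
          H₁.map (QuotientGroup.mk' N)

lemma conjBy_conjBy {G : Type*} [Group G] (c d : G) (H : Subgroup G) :
    conjBy c (conjBy d H) = conjBy (d * c) H := by
  ext x
  simp [mem_conjBy, mul_assoc]

lemma conjBy_one {G : Type*} [Group G] (H : Subgroup G) : conjBy 1 H = H := by
  ext x; simp [mem_conjBy]

lemma conjBy_mono {G : Type*} [Group G] (c : G) {H K : Subgroup G} (h : H ≤ K) :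
    conjBy c H ≤ conjBy c K := fun x hx => mem_conjBy.2 (h (mem_conjBy.1 hx))

lemma conjBy_fg {G : Type*} [Group G] (c : G) {H : Subgroup G} (h : H.FG) :
    (conjBy c H).FG := by
  obtain ⟨S, hS, hfin⟩ := (Subgroup.fg_iff _).1 h
  exact (Subgroup.fg_iff _).2 ⟨_ '' S, by rw [conjBy, ← hS, MonoidHom.map_closure], hfin.image _⟩

/-- A group without expanding inner automorphisms that is SICS is SCS. -/
theorem stmt_13 {G : Type*} [Group G]
    (hnoexp : ¬ ∃ (H : Subgroup G) (g : G), H.FG ∧ H < conjBy g H)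
    (hsics : SICS G) : SCS G := by
  intro H₁ H₂ h1 h2 hne
  by_cases hc : ∃ g : G, conjBy g H₂ ≤ H₁
  · obtain ⟨g, hg⟩ := hc
    have hclaim : ∀ g' : G, ¬ conjBy g' H₁ ≤ H₂ := by
      intro g' hg'
      have h3 : conjBy (g' * g) H₁ ≤ H₁ := by
        rw [← conjBy_conjBy]
        exact le_trans (conjBy_mono g hg') hg
      have heq : conjBy (g' * g) H₁ = H₁ := by
        by_contra hne'
        apply hnoexp
        refine ⟨conjBy (g' * g) H₁, (g' * g)⁻¹, conjBy_fg _ h1, ?_⟩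
        rw [conjBy_conjBy, mul_inv_cancel, conjBy_one]
        exact lt_of_le_of_ne h3 hne'
      apply hne g
      refine le_antisymm hg ?_
      calc H₁ = conjBy (g' * g) H₁ := heq.symm
        _ = conjBy g (conjBy g' H₁) := (conjBy_conjBy _ _ _).symm
        _ ≤ conjBy g H₂ := conjBy_mono g hg'
    obtain ⟨N, hN, hfin, hsep⟩ := hsics H₂ H₁ h2 h1 hclaim
    refine ⟨N, hN, hfin, ?_⟩
    intro q heq
    apply hsep q⁻¹
    rw [← heq, conjBy_conjBy, mul_inv_cancel, conjBy_one]
  · push_neg at hc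
    obtain ⟨N, hN, hfin, hsep⟩ := hsics H₁ H₂ h1 h2 hc
    refine ⟨N, hN, hfin, ?_⟩
    intro q heq
    exact hsep q (le_of_eq heq)
end

section
/- Let F be a free group on s generators x₁,…,x_s, let H = ⟨x₁,…,x_s | r₁,…,r_t⟩ be a finitely presented quotient of F with quotient map π: F → H, and let L_H ≤ F × F be the subgroup generated by the pairs (xᵢ, xᵢ) for i = 1,…,s and (1, rⱼ) for j = 1,…,t. Then for any u ∈ F, the cyclic subgroup ⟨(u,1)⟩ of F × F is conjugate into L_H if and only if π(u) = 1 in H. -/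
theorem conjBy_zpowers_le_iff {G : Type*} [Group G] (c g : G) (K : Subgroup G) :
    conjBy c (Subgroup.zpowers g) ≤ K ↔ c⁻¹ * g * c ∈ K := by
  rw [conjBy, Subgroup.map_le_iff_le_comap, Subgroup.zpowers_le]
  simp

namespace Mihailova

variable {F H : Type*} [Group F] [Group H]

def subgroup (S R : Set F) : Subgroup (F × F) :=
  Subgroup.closure ((fun x => (x, x)) '' S ∪ (fun r => ((1 : F), r)) '' R)

variable {S : Set F} (R : Set F)

theorem diag_mem_subgroup (hS : Subgroup.closure S = ⊤) (w : F) : (w, w) ∈ subgroup S R := by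
  let diag : F →* F × F := (MonoidHom.id F).prod (MonoidHom.id F)
  have hw : diag w ∈ (Subgroup.closure S).map diag := Subgroup.mem_map_of_mem _ (by simp [hS])
  rw [MonoidHom.map_closure] at hw
  exact Subgroup.closure_mono Set.subset_union_left hw

/-- The second coordinates of the elements `(1, w)` of `subgroup S R` form a normal subgroup,
since conjugating by the diagonal element `(g, g)` conjugates that coordinate by `g`. -/
theorem inr_mem_subgroup_of_mem_normalClosure (hS : Subgroup.closure S = ⊤) {w : F}
    (hw : w ∈ Subgroup.normalClosure R) : ((1 : F), w) ∈ subgroup S R := by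
  let N := (subgroup S R).comap (MonoidHom.inr F F)
  have hN : N.Normal := ⟨fun n hn g => by
    have hconj : (g, g) * ((1 : F), n) * (g, g)⁻¹ ∈ subgroup S R := (subgroup S R).mul_mem
      ((subgroup S R).mul_mem (diag_mem_subgroup R hS g) hn)
      ((subgroup S R).inv_mem (diag_mem_subgroup R hS g))
    simpa [N, Prod.ext_iff] using hconj⟩
  have hRN : R ⊆ N := fun r hr => Subgroup.subset_closure (Or.inr ⟨r, hr, rfl⟩)
  exact Subgroup.normalClosure_le_normal hRN hw

theorem mem_subgroup_iff (hS : Subgroup.closure S = ⊤) {π : F →* H}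
    (hker : π.ker = Subgroup.normalClosure R) {u v : F} :
    (u, v) ∈ subgroup S R ↔ π u = π v := by
  constructor
  · intro huv
    have hle : subgroup S R ≤
        (π.comp (MonoidHom.fst F F)).eqLocus (π.comp (MonoidHom.snd F F)) := by
      refine (Subgroup.closure_le _).mpr ?_
      rintro _ (⟨x, -, rfl⟩ | ⟨r, hr, rfl⟩)
      · rfl
      · have hr' : r ∈ π.ker := hker ▸ Subgroup.subset_normalClosure hr
        exact (map_one π).trans (MonoidHom.mem_ker.mp hr').symm
    exact hle huv
  · intro huv
    have hker' : u⁻¹ * v ∈ Subgroup.normalClosure R := by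
      rw [← hker, MonoidHom.mem_ker, map_mul, map_inv, huv, inv_mul_cancel]
    have hmem := (subgroup S R).mul_mem (diag_mem_subgroup R hS u)
      (inr_mem_subgroup_of_mem_normalClosure R hS hker')
    simpa using hmem

end Mihailova

theorem stmt_14_general {s t : ℕ} {H : Type*} [Group H]
    (r : Fin t → FreeGroup (Fin s)) (π : FreeGroup (Fin s) →* H)
    (hker : π.ker = Subgroup.normalClosure (Set.range r))
    (L : Subgroup (FreeGroup (Fin s) × FreeGroup (Fin s)))
    (hL : L = Subgroup.closure
      ((Set.range fun i : Fin s =>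
          ((FreeGroup.of i, FreeGroup.of i) : FreeGroup (Fin s) × FreeGroup (Fin s))) ∪
        (Set.range fun j : Fin t =>
          ((1, r j) : FreeGroup (Fin s) × FreeGroup (Fin s))))) :
    ∀ u : FreeGroup (Fin s),
      (∃ c : FreeGroup (Fin s) × FreeGroup (Fin s),
        conjBy c (Subgroup.zpowers ((u, 1) : FreeGroup (Fin s) × FreeGroup (Fin s))) ≤ L)
        ↔ π u = 1 := by
  have hLS : L = Mihailova.subgroup (Set.range FreeGroup.of) (Set.range r) := by
    rw [hL, Mihailova.subgroup, ← Set.range_comp, ← Set.range_comp]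
    rfl
  have key : ∀ u v, (u, v) ∈ L ↔ π u = π v := fun u v =>
    hLS ▸ Mihailova.mem_subgroup_iff _ (FreeGroup.closure_range_of _) hker
  intro u
  simp only [conjBy_zpowers_le_iff]
  constructor
  · rintro ⟨c, hc⟩
    have hconj : c⁻¹ * (u, 1) * c = (c.1⁻¹ * u * c.1, 1) := by simp [Prod.ext_iff]
    rw [hconj, key] at hc
    exact (conj_eq_one_iff (a := (π c.1)⁻¹)).mp (by simpa using hc)
  · intro hu
    exact ⟨1, by simpa [key] using hu⟩

/-- Mihailova construction: for `H = ⟨x₁,…,x_s | r₁,…,r_t⟩` with quotient map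
`π : F → H` and `L_H ≤ F × F` generated by the `(xᵢ,xᵢ)` and `(1,rⱼ)`, the cyclic
subgroup `⟨(u,1)⟩` is conjugate into `L_H` iff `π u = 1`. -/
theorem stmt_14 {s t : ℕ} {H : Type*} [Group H]
    (r : Fin t → FreeGroup (Fin s)) (π : FreeGroup (Fin s) →* H)
    (hπ : Function.Surjective π)
    (hker : π.ker = Subgroup.normalClosure (Set.range r))
    (L : Subgroup (FreeGroup (Fin s) × FreeGroup (Fin s)))
    (hL : L = Subgroup.closure
      ((Set.range fun i : Fin s =>
          ((FreeGroup.of i, FreeGroup.of i) : FreeGroup (Fin s) × FreeGroup (Fin s))) ∪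
        (Set.range fun j : Fin t =>
          ((1, r j) : FreeGroup (Fin s) × FreeGroup (Fin s))))) :
    ∀ u : FreeGroup (Fin s),
      (∃ c : FreeGroup (Fin s) × FreeGroup (Fin s),
        conjBy c (Subgroup.zpowers ((u, 1) : FreeGroup (Fin s) × FreeGroup (Fin s))) ≤ L)
        ↔ π u = 1 :=
  stmt_14_general r π hker L hL
end
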